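/- For every odd integer n ≥ 3, the Sombor characteristic polynomial of the order super commuting graph Δ^o(D_{2n}) of the dihedral group D_{2n} equals (x + (n−1)·√2)^{n−2} · (x + n·√2)^{n−1} · [ x·(x − (n−1)(n−2)·√2)·(x − n(n−1)·√2) − (n−1)(5n² − 6n + 2)·(x − n(n−1)·√2) − n(5n² − 4n + 1)·(x − (n−1)(n−2)·√2) ]. -/

import Mathlib

open Polynomial
open scoped Classical

/-- Degree of a vertex. -/
noncomputable def sdeg {V : Type*} (G : SimpleGraph V) (v : V) : ℕ := {u | G.Adj v u}.ncard

/-- Sombor matrix of a graph. -/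
noncomputable def somborMatrix {V : Type*} (G : SimpleGraph V) : Matrix V V ℝ :=
  Matrix.of fun u v =>
    if G.Adj u v then Real.sqrt ((sdeg G u : ℝ) ^ 2 + (sdeg G v : ℝ) ^ 2) else 0

/-- Sombor characteristic polynomial det(x·I − S(Γ)). -/
noncomputable def somborCharpoly {V : Type*} [Fintype V] [DecidableEq V] (G : SimpleGraph V) :
    Polynomial ℝ :=
  (somborMatrix G).charpoly

noncomputable def rt2 : ℝ := Real.sqrt 2

/-- The `R`-super `Γ` graph. -/
def superGraph {V : Type*} (A : SimpleGraph V) (r : V → V → Prop) (hr : Equivalence r) :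
    SimpleGraph V where
  Adj x y := x ≠ y ∧ (r x y ∨ ∃ x' y', r x x' ∧ r y y' ∧ A.Adj x' y')
  symm := by
    constructor
    rintro x y ⟨hxy, h | ⟨x', y', hx, hy, hadj⟩⟩
    · exact ⟨hxy.symm, Or.inl (hr.symm h)⟩
    · exact ⟨hxy.symm, Or.inr ⟨y', x', hy, hx, hadj.symm⟩⟩
  loopless := by constructor; rintro x ⟨h, -⟩; exact h rfl

/-- Same-order relation. -/
def orderRel (G : Type*) [Monoid G] : G → G → Prop := fun x y => orderOf x = orderOf y

theorem orderRel_equivalence (G : Type*) [Monoid G] : Equivalence (orderRel G) :=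
  ⟨fun _ => rfl, fun h => h.symm, fun h1 h2 => h1.trans h2⟩

/-- Conjugacy relation. -/
def conjRel (G : Type*) [Group G] : G → G → Prop := fun x y => ∃ a : G, x = a * y * a⁻¹

theorem conjRel_equivalence (G : Type*) [Group G] : Equivalence (conjRel G) := by
  constructor
  · intro x; exact ⟨1, by simp⟩
  · rintro x y ⟨a, rfl⟩; exact ⟨a⁻¹, by group⟩
  · rintro x y z ⟨a, rfl⟩ ⟨b, rfl⟩; exact ⟨a * b, by group⟩

/-- Commuting graph. -/
def commutingGraph (G : Type*) [Group G] : SimpleGraph G where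
  Adj x y := x ≠ y ∧ x * y = y * x
  symm := by constructor; rintro x y ⟨h, c⟩; exact ⟨h.symm, c.symm⟩
  loopless := by constructor; rintro x ⟨h, -⟩; exact h rfl

/-- Power graph. -/
def powerGraph (G : Type*) [Group G] : SimpleGraph G where
  Adj x y := x ≠ y ∧ (x ∈ Subgroup.zpowers y ∨ y ∈ Subgroup.zpowers x)
  symm := by constructor; rintro x y ⟨h, c⟩; exact ⟨h.symm, c.symm⟩
  loopless := by constructor; rintro x ⟨h, -⟩; exact h rfl

/-- Enhanced power graph. -/
def enhancedPowerGraph (G : Type*) [Group G] : SimpleGraph G where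
  Adj x y := x ≠ y ∧ ∃ z : G, x ∈ Subgroup.zpowers z ∧ y ∈ Subgroup.zpowers z
  symm := by constructor; rintro x y ⟨h, z, hx, hy⟩; exact ⟨h.symm, z, hy, hx⟩
  loopless := by constructor; rintro x ⟨h, -⟩; exact h rfl

/-!
In `D_{2n}` with `n` odd, a nontrivial rotation has odd order and commutes with no reflection,
while all reflections have order `2`. Hence two distinct vertices of `Δ^o(D_{2n})` are adjacent
unless one is a nontrivial rotation and the other a reflection, so the graph, and with it its
Sombor matrix `S`, is a blow-up of a `3 × 3` matrix `B` along the blocks (nontrivial rotations,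
reflections, identity) of sizes `n - 1`, `n`, `1`, on which the degrees are `n - 1`, `n`, `2n - 1`.
Writing `xI - S = D - P B Pᵀ` with `D` diagonal and `P` the block indicator matrix, the identity
`det (1 - A B) = det (1 - B A)` reduces the determinant to a `3 × 3` one: block `t` contributes
`(x + B t t) ^ (|t| - 1)`, and the remaining cubic is `det (diag (x + B t t) - B · diag |t|)`.
-/

open Matrix Finset

section BlowUp

variable {ι κ R : Type*}

def indicatorMatrix (R : Type*) [Zero R] [One R] [DecidableEq κ] (cl : ι → κ) : Matrix ι κ R :=
  of fun i t => if cl i = t then 1 else 0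

def blowUp [Zero R] [DecidableEq ι] (B : Matrix κ κ R) (cl : ι → κ) : Matrix ι ι R :=
  of fun u v => if u = v then 0 else B (cl u) (cl v)

variable [DecidableEq κ] [CommRing R]

@[simp]
lemma indicatorMatrix_map {S : Type*} [CommRing S] (cl : ι → κ) (f : R →+* S) :
    (indicatorMatrix R cl).map f = indicatorMatrix S cl := by
  ext i t
  simp [indicatorMatrix, apply_ite f]

lemma indicatorMatrix_mul_mul_transpose_apply [Fintype κ] (cl : ι → κ) (A : Matrix κ κ R)
    (i j : ι) : (indicatorMatrix R cl * A * (indicatorMatrix R cl)ᵀ) i j = A (cl i) (cl j) := by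
  simp [indicatorMatrix, mul_apply]

variable [Fintype ι] [DecidableEq ι]

lemma indicatorMatrix_transpose_mul_diagonal_mul (cl : ι → κ) (h : κ → R) :
    (indicatorMatrix R cl)ᵀ * diagonal (h ∘ cl) * indicatorMatrix R cl =
      diagonal fun t => (#{i | cl i = t} : R) * h t := by
  ext s t
  rw [mul_apply]
  simp only [mul_diagonal, transpose_apply, indicatorMatrix, of_apply, Function.comp_apply,
    ite_mul, one_mul, zero_mul, mul_ite, mul_one, mul_zero, diagonal_apply]
  split_ifs with hst
  · subst hst
    rw [← sum_filter, sum_congr rfl fun i hi => by rw [if_pos (mem_filter.1 hi).2,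
      (mem_filter.1 hi).2], sum_const, nsmul_eq_mul]
  · exact sum_eq_zero fun i _ => by grind

variable [Fintype κ]

lemma det_diagonal_comp (cl : ι → κ) (g : κ → R) :
    (diagonal (g ∘ cl)).det = ∏ t, g t ^ #{i | cl i = t} := by
  rw [det_diagonal, Function.comp_def, ← prod_fiberwise' univ cl g]
  simp

theorem det_diagonal_comp_sub_indicatorMatrix_mul_of_field {F : Type*} [Field F] (cl : ι → κ)
    (g : κ → F) (hg : ∀ t, g t ≠ 0) (B : Matrix κ κ F) :
    (diagonal (g ∘ cl) - indicatorMatrix F cl * B * (indicatorMatrix F cl)ᵀ).det * ∏ t, g t =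
      (∏ t, g t ^ #{i | cl i = t}) *
        (diagonal g - B * diagonal fun t => (#{i | cl i = t} : F)).det := by
  set P := indicatorMatrix F cl
  set D : Matrix κ κ F := diagonal fun t => (#{i | cl i = t} : F) * (g t)⁻¹
  have hinv : diagonal (g ∘ cl) * diagonal ((fun t => (g t)⁻¹) ∘ cl) = 1 := by
    rw [diagonal_mul_diagonal, ← diagonal_one]
    exact congrArg diagonal (funext fun i => mul_inv_cancel₀ (hg (cl i)))
  have hfactor : diagonal (g ∘ cl) - P * B * Pᵀ =
      diagonal (g ∘ cl) * (1 - (diagonal ((fun t => (g t)⁻¹) ∘ cl) * P) * (B * Pᵀ)) := by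
    simp only [mul_sub, mul_one, ← Matrix.mul_assoc, hinv, Matrix.one_mul]
  have hquot : B * Pᵀ * (diagonal ((fun t => (g t)⁻¹) ∘ cl) * P) = B * D := by
    rw [Matrix.mul_assoc, ← Matrix.mul_assoc Pᵀ, indicatorMatrix_transpose_mul_diagonal_mul]
  have hscale : (1 - B * D) * diagonal g =
      diagonal g - B * diagonal fun t => (#{i | cl i = t} : F) := by
    rw [sub_mul, Matrix.one_mul, Matrix.mul_assoc, diagonal_mul_diagonal]
    congr 3
    funext t
    rw [mul_assoc, inv_mul_cancel₀ (hg t), mul_one]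
  rw [hfactor, det_mul, det_one_sub_mul_comm, hquot, det_diagonal_comp, mul_assoc, ← hscale,
    det_mul, det_diagonal]

theorem det_diagonal_comp_sub_indicatorMatrix_mul [IsDomain R] (cl : ι → κ) (g : κ → R)
    (hg : ∀ t, g t ≠ 0) (B : Matrix κ κ R) :
    (diagonal (g ∘ cl) - indicatorMatrix R cl * B * (indicatorMatrix R cl)ᵀ).det * ∏ t, g t =
      (∏ t, g t ^ #{i | cl i = t}) *
        (diagonal g - B * diagonal fun t => (#{i | cl i = t} : R)).det := by
  let φ := algebraMap R (FractionRing R)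
  apply IsFractionRing.injective R (FractionRing R)
  have := det_diagonal_comp_sub_indicatorMatrix_mul_of_field cl (φ ∘ g)
    (fun t => (map_ne_zero_iff φ (IsFractionRing.injective R _)).2 (hg t)) (B.map φ)
  simpa [φ, RingHom.map_det, Matrix.map_sub, Matrix.map_mul, diagonal_map, transpose_map,
    Function.comp_def] using this

lemma charmatrix_blowUp (B : Matrix κ κ R) (cl : ι → κ) :
    charmatrix (blowUp B cl) = diagonal ((fun t => X + C (B t t)) ∘ cl) -
      indicatorMatrix R[X] cl * B.map C * (indicatorMatrix R[X] cl)ᵀ := by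
  ext i j : 1
  rw [Matrix.sub_apply, indicatorMatrix_mul_mul_transpose_apply]
  by_cases hij : i = j
  · subst hij
    simp [blowUp]
  · simp [blowUp, hij]

theorem charpoly_blowUp_mul_prod [IsDomain R] (B : Matrix κ κ R) (cl : ι → κ) :
    (blowUp B cl).charpoly * ∏ t, (X + C (B t t)) =
      (∏ t, (X + C (B t t)) ^ #{i | cl i = t}) *
        (diagonal (fun t => X + C (B t t)) -
          B.map C * diagonal fun t => (#{i | cl i = t} : R[X])).det := by
  rw [charpoly, charmatrix_blowUp]
  exact det_diagonal_comp_sub_indicatorMatrix_mul cl _ (fun t => X_add_C_ne_zero _) _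

end BlowUp

theorem charpoly_blowUp_fin_three {ι R : Type*} [Fintype ι] [DecidableEq ι] [CommRing R]
    [IsDomain R] (B : Matrix (Fin 3) (Fin 3) R) (hB₀₁ : B 0 1 = 0) (hB₁₀ : B 1 0 = 0)
    (cl : ι → Fin 3) (m k : ℕ) (hm : #{i | cl i = 0} = m + 1) (hk : #{i | cl i = 1} = k + 1)
    (h₂ : #{i | cl i = 2} = 1) :
    (blowUp B cl).charpoly =
      (X + C (B 0 0)) ^ m * (X + C (B 1 1)) ^ k *
        (X * (X - C (m * B 0 0)) * (X - C (k * B 1 1)) -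
          C ((m + 1) * (B 0 2 * B 2 0)) * (X - C (k * B 1 1)) -
          C ((k + 1) * (B 1 2 * B 2 1)) * (X - C (m * B 0 0))) := by
  have h := charpoly_blowUp_mul_prod B cl
  simp only [Fin.prod_univ_three, hm, hk, h₂, det_fin_three] at h
  refine mul_right_cancel₀ (b := (X + C (B 0 0)) * (X + C (B 1 1)) * (X + C (B 2 2)))
    (by simp [X_add_C_ne_zero]) ?_
  rw [h]
  simp only [Matrix.sub_apply, Matrix.mul_diagonal, diagonal_apply, map_apply, hB₀₁, hB₁₀, hm, hk,
    h₂, Fin.reduceEq, if_true, if_false]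
  simp only [C_mul, C_add, map_natCast, C_1, C_0]
  push_cast
  ring

lemma card_filter_comp_eq_sum {V κ : Type*} [Fintype V] [Fintype κ] [DecidableEq κ] (cl : V → κ)
    (p : κ → Prop) [DecidablePred p] : #{v | p (cl v)} = ∑ t with p t, #{v | cl v = t} := by
  rw [card_filter, ← sum_fiberwise' univ cl fun t => if p t then 1 else 0, sum_filter]
  refine sum_congr rfl fun t _ => ?_
  split_ifs <;> simp

section SomborBlowUp

variable {V κ : Type*}

lemma sdeg_add_one_eq_card [Fintype V] [DecidableEq V] (G : SimpleGraph V) (cl : V → κ)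
    (R : κ → κ → Prop) [DecidableRel R] (hR : ∀ t, R t t)
    (hadj : ∀ u v, G.Adj u v ↔ u ≠ v ∧ R (cl u) (cl v)) (u : V) :
    sdeg G u + 1 = #{v | R (cl u) (cl v)} := by
  have hnbr : {v | G.Adj u v} = ↑((univ.filter fun v => R (cl u) (cl v)).erase u) := by
    ext v
    simp [hadj, and_comm, eq_comm]
  rw [sdeg, hnbr, Set.ncard_coe_finset, card_erase_add_one (by simp [hR])]

noncomputable def somborQuotient (R : κ → κ → Prop) [DecidableRel R] (δ : κ → ℕ) :
    Matrix κ κ ℝ :=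
  of fun s t => if R s t then √((δ s : ℝ) ^ 2 + (δ t : ℝ) ^ 2) else 0

section SomborQuotient

variable {R : κ → κ → Prop} [DecidableRel R] {δ : κ → ℕ} {s t : κ}

lemma somborQuotient_apply_of_not (h : ¬R s t) : somborQuotient R δ s t = 0 := by
  simp [somborQuotient, h]

lemma somborQuotient_apply_self (h : R s s) : somborQuotient R δ s s = δ s * √2 := by
  rw [somborQuotient, of_apply, if_pos h, ← two_mul, Real.sqrt_mul zero_le_two,
    Real.sqrt_sq (Nat.cast_nonneg _), mul_comm]

lemma somborQuotient_mul_apply_swap (hst : R s t) (hts : R t s) :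
    somborQuotient R δ s t * somborQuotient R δ t s = (δ s : ℝ) ^ 2 + (δ t : ℝ) ^ 2 := by
  rw [somborQuotient, of_apply, of_apply, if_pos hst, if_pos hts, add_comm ((δ t : ℝ) ^ 2),
    Real.mul_self_sqrt (by positivity)]

end SomborQuotient

lemma somborMatrix_eq_blowUp [DecidableEq V] (G : SimpleGraph V) (cl : V → κ)
    (R : κ → κ → Prop) [DecidableRel R] (hadj : ∀ u v, G.Adj u v ↔ u ≠ v ∧ R (cl u) (cl v))
    (δ : κ → ℕ) (hdeg : ∀ v, sdeg G v = δ (cl v)) :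
    somborMatrix G = blowUp (somborQuotient R δ) cl := by
  ext u v
  by_cases huv : u = v
  · simp [somborMatrix, blowUp, huv]
  · simp [somborMatrix, blowUp, somborQuotient, huv, hadj, hdeg]

end SomborBlowUp

namespace DihedralGroup

variable {n : ℕ}

def block : DihedralGroup n → Fin 3
  | r i => if i = 0 then 2 else 0
  | sr _ => 1

lemma block_eq_two_iff (x : DihedralGroup n) : block x = 2 ↔ x = 1 := by
  cases x with
  | r i => simp only [block, one_def, r.injEq]; split_ifs <;> simp_all
  | sr i => simp only [block, one_def, reduceCtorEq]; decide

lemma orderOf_eq_two_iff_block (hodd : Odd n) (x : DihedralGroup n) :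
    orderOf x = 2 ↔ block x = 1 := by
  cases x with
  | r i =>
    have : NeZero n := ⟨hodd.pos.ne'⟩
    have hdvd : orderOf (r i) ∣ n := orderOf_r i ▸ Nat.div_dvd_of_dvd (Nat.gcd_dvd_left _ _)
    refine iff_of_false (fun h => ?_) (by simp only [block]; split_ifs <;> decide)
    exact Nat.not_even_iff_odd.2 hodd (even_iff_two_dvd.2 (h ▸ hdvd))
  | sr i => simp [block, orderOf_sr]

lemma block_eq_of_orderOf_eq (hodd : Odd n) {x y : DihedralGroup n}
    (h : orderOf x = orderOf y) : block x = block y := by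
  have h₁ : block x = 1 ↔ block y = 1 := by
    rw [← orderOf_eq_two_iff_block hodd, ← orderOf_eq_two_iff_block hodd, h]
  have h₂ : block x = 2 ↔ block y = 2 := by
    rw [block_eq_two_iff, block_eq_two_iff, ← orderOf_eq_one_iff (x := x),
      ← orderOf_eq_one_iff (x := y), h]
  revert h₁ h₂
  generalize block x = s
  generalize block y = t
  decide +revert

lemma block_eq_or_eq_two_of_commute (hodd : Odd n) {x y : DihedralGroup n} (h : Commute x y) :
    block x = block y ∨ block x = 2 ∨ block y = 2 := by
  have hrot : ∀ i j : ZMod n, Commute (r i) (sr j) → i = 0 := fun i j h => by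
    simpa [r_mul_sr, sr_mul_r, sub_eq_add_neg, neg_eq_iff_add_eq_zero,
      ZMod.add_self_eq_zero_iff_eq_zero hodd] using h.eq
  cases x with
  | r i => cases y with
    | r j => simp only [block]; split_ifs <;> simp
    | sr j => simp [block, hrot i j h]
  | sr i => cases y with
    | r j => simp [block, hrot j i h.symm]
    | sr j => simp [block]

lemma commute_of_block_ne_one {x y : DihedralGroup n} (hx : block x ≠ 1) (hy : block y ≠ 1) :
    Commute x y := by
  cases x with
  | r i => cases y with
    | r j => exact congrArg r (add_comm i j)
    | sr j => exact absurd rfl hy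
  | sr i => exact absurd rfl hx

lemma superCommuting_adj_iff (hodd : Odd n) (x y : DihedralGroup n) :
    (superGraph (commutingGraph (DihedralGroup n)) (orderRel (DihedralGroup n))
        (orderRel_equivalence (DihedralGroup n))).Adj x y ↔
      x ≠ y ∧ (block x = block y ∨ block x = 2 ∨ block y = 2) := by
  refine and_congr_right fun hxy => ⟨?_, fun h => ?_⟩
  · rintro (h | ⟨x', y', hx, hy, -, hc⟩)
    · exact Or.inl (block_eq_of_orderOf_eq hodd h)
    · rw [block_eq_of_orderOf_eq hodd hx, block_eq_of_orderOf_eq hodd hy]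
      exact block_eq_or_eq_two_of_commute hodd hc
  by_cases hrefl : block x = 1 ∧ block y = 1
  · left
    show orderOf x = orderOf y
    rw [(orderOf_eq_two_iff_block hodd x).2 hrefl.1, (orderOf_eq_two_iff_block hodd y).2 hrefl.2]
  · refine Or.inr ⟨x, y, rfl, rfl, hxy, ?_⟩
    rcases h with h | h | h
    · exact commute_of_block_ne_one (fun hx => hrefl ⟨hx, h ▸ hx⟩) fun hy => hrefl ⟨h ▸ hy, hy⟩
    · exact (block_eq_two_iff x).1 h ▸ Commute.one_left y
    · exact (block_eq_two_iff y).1 h ▸ Commute.one_right x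

variable [NeZero n]

lemma card_block_eq_two : #{x : DihedralGroup n | block x = 2} = 1 := by
  rw [card_eq_one]
  exact ⟨1, by ext x; simp [block_eq_two_iff]⟩

lemma card_block_eq_one : #{x : DihedralGroup n | block x = 1} = n := by
  have h : univ.filter (fun x : DihedralGroup n => block x = 1) =
      univ.map ⟨sr, fun _ _ h => sr.inj h⟩ := by
    ext x
    rw [mem_filter, mem_map]
    cases x with
    | r i => simp only [block]; split_ifs <;> simp
    | sr i => simpa [block] using ⟨i, rfl⟩
  rw [h, card_map, card_univ, ZMod.card]

lemma card_block_eq_zero : #{x : DihedralGroup n | block x = 0} = n - 1 := by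
  have h := card_eq_sum_card_fiberwise (f := block) (s := (univ : Finset (DihedralGroup n)))
    (t := univ) (by simp)
  rw [card_univ, DihedralGroup.card (n := n), Fin.sum_univ_three, card_block_eq_one,
    card_block_eq_two] at h
  omega

lemma sdeg_superCommuting (hodd : Odd n) (x : DihedralGroup n) :
    sdeg (superGraph (commutingGraph (DihedralGroup n)) (orderRel (DihedralGroup n))
        (orderRel_equivalence (DihedralGroup n))) x = ![n - 1, n, 2 * n - 1] (block x) := by
  have h := sdeg_add_one_eq_card _ block (fun s t => s = t ∨ s = 2 ∨ t = 2) (fun t => Or.inl rfl)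
    (superCommuting_adj_iff hodd) x
  rw [card_filter_comp_eq_sum block (fun t => block x = t ∨ block x = 2 ∨ t = 2), sum_filter,
    Fin.sum_univ_three, card_block_eq_zero, card_block_eq_one, card_block_eq_two] at h
  have : 1 ≤ n := NeZero.one_le
  generalize block x = s at h
  fin_cases s <;> simp at h ⊢ <;> omega

end DihedralGroup

open DihedralGroup in
theorem stmt6 (n : ℕ) [NeZero n] (hn : 3 ≤ n) (hodd : Odd n) :
    somborCharpoly (superGraph (commutingGraph (DihedralGroup n))
        (orderRel (DihedralGroup n)) (orderRel_equivalence (DihedralGroup n))) =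
      (X + C (((n : ℝ) - 1) * rt2)) ^ (n - 2) * (X + C ((n : ℝ) * rt2)) ^ (n - 1) *
        (X * (X - C (((n : ℝ) - 1) * ((n : ℝ) - 2) * rt2)) *
            (X - C ((n : ℝ) * ((n : ℝ) - 1) * rt2)) -
          C (((n : ℝ) - 1) * (5 * (n : ℝ) ^ 2 - 6 * (n : ℝ) + 2)) *
            (X - C ((n : ℝ) * ((n : ℝ) - 1) * rt2)) -
          C ((n : ℝ) * (5 * (n : ℝ) ^ 2 - 4 * (n : ℝ) + 1)) *
            (X - C (((n : ℝ) - 1) * ((n : ℝ) - 2) * rt2))) := by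
  rw [somborCharpoly, somborMatrix_eq_blowUp _ block (fun s t => s = t ∨ s = 2 ∨ t = 2)
      (superCommuting_adj_iff hodd) _ (sdeg_superCommuting hodd),
    charpoly_blowUp_fin_three _ (somborQuotient_apply_of_not (by decide))
      (somborQuotient_apply_of_not (by decide)) block (n - 2) (n - 1)
      (by rw [card_block_eq_zero]; omega) (by rw [card_block_eq_one]; omega) card_block_eq_two,
    somborQuotient_apply_self (by decide), somborQuotient_apply_self (by decide),
    somborQuotient_mul_apply_swap (by decide) (by decide),
    somborQuotient_mul_apply_swap (by decide) (by decide)]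
  simp only [rt2, Matrix.cons_val, Nat.cast_sub (show 1 ≤ n by omega),
    Nat.cast_sub (show 2 ≤ n by omega), Nat.cast_sub (show 1 ≤ 2 * n by omega)]
  simp only [map_mul, map_sub, map_add, map_pow, map_natCast, map_ofNat, map_one, Nat.cast_mul,
    Nat.cast_ofNat, Nat.cast_one]
  ring
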